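/- arXiv:2601.11418 — 4 statements merged into one kernel-verified Lean document; each statement's English description precedes it below -/
import Mathlib

section
/- Let M' = (V, E') and M'' = (V, E'') be two matchings viewed as simple graphs on a common finite vertex set V (i.e., each of E' and E'' is a set of pairwise vertex-disjoint edges), with adjacency matrices A' and A''. Then A' and A'' commute if and only if every connected component of the union graph (V, E' ∪ E'') is an isolated vertex (K₁), a single edge (K₂), or a cycle on 4 vertices (C₄). -/
/-!
For matchings, `(A'A'')ᵤᵥ` is `1` when there is a path `u –' w –'' v` alternating between the two
matchings and `0` otherwise. As `A''A' = (A'A'')ᵀ`, the matrices commute iff every such path with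
`u ≠ v` is closed by a path `u –'' x –' v` into an alternating 4-cycle. Every vertex of `M' ∪ M''`
has at most one neighbour in each matching, so under this closure property a vertex with two
distinct neighbours lies on an alternating 4-cycle that is its whole component, and every other
component has at most two vertices. Conversely, a path `u –' w –'' v` with `u ≠ v` lies in a
component with at least three vertices, hence a `C₄`; there `u` has an `M''`-partner `b` and `v` an
`M'`-partner `x`, and `x = b`, since otherwise `b, u, w, v, x` would be five distinct vertices.
-/

namespace SimpleGraph

variable {V : Type*}

theorem comp_adj_iff_comp_adj_swap {G H : SimpleGraph V} {u v : V} :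
    Relation.Comp G.Adj H.Adj u v ↔ Relation.Comp H.Adj G.Adj v u :=
  ⟨fun ⟨w, huw, hwv⟩ => ⟨w, hwv.symm, huw.symm⟩, fun ⟨w, hvw, hwu⟩ => ⟨w, hwu.symm, hvw.symm⟩⟩

theorem comp_adj_imp_symm {G H : SimpleGraph V}
    (hC : ∀ u v, Relation.Comp G.Adj H.Adj u v → Relation.Comp H.Adj G.Adj u v) (u v : V) :
    Relation.Comp H.Adj G.Adj u v → Relation.Comp G.Adj H.Adj u v :=
  fun huv => comp_adj_iff_comp_adj_swap.2 (hC v u (comp_adj_iff_comp_adj_swap.1 huv))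

section AdjMatrix

variable [Fintype V] {R : Type*} [NonAssocSemiring R] (G H : SimpleGraph V)
  [DecidableRel G.Adj] [DecidableRel H.Adj]

open Classical in
theorem adjMatrix_mul_adjMatrix_apply_eq_ite
    (hG : ∀ v w w' : V, G.Adj v w → G.Adj v w' → w = w') (u v : V) :
    (G.adjMatrix R * H.adjMatrix R) u v = if Relation.Comp G.Adj H.Adj u v then 1 else 0 := by
  rw [adjMatrix_mul_apply]
  by_cases hu : ∃ w, G.Adj u w
  · obtain ⟨w, huw⟩ := hu
    have hnbr : G.neighborFinset u = {w} := by
      ext x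
      simpa using ⟨fun hux => hG u x w hux huw, fun hx => hx ▸ huw⟩
    rw [hnbr, Finset.sum_singleton, adjMatrix_apply]
    exact if_congr ⟨fun hwv => ⟨w, huw, hwv⟩, fun ⟨x, hux, hxv⟩ => hG u x w hux huw ▸ hxv⟩ rfl rfl
  · rw [if_neg fun ⟨w, huw, _⟩ => hu ⟨w, huw⟩]
    exact Finset.sum_eq_zero fun w hw => absurd ⟨w, (mem_neighborFinset G u w).1 hw⟩ hu

theorem adjMatrix_mul_comm_iff [Nontrivial R]
    (hG : ∀ v w w' : V, G.Adj v w → G.Adj v w' → w = w')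
    (hH : ∀ v w w' : V, H.Adj v w → H.Adj v w' → w = w') :
    G.adjMatrix R * H.adjMatrix R = H.adjMatrix R * G.adjMatrix R ↔
      ∀ u v, Relation.Comp G.Adj H.Adj u v → Relation.Comp H.Adj G.Adj u v := by
  classical
  simp only [← Matrix.ext_iff, adjMatrix_mul_adjMatrix_apply_eq_ite _ _ hG,
    adjMatrix_mul_adjMatrix_apply_eq_ite _ _ hH]
  refine ⟨fun h u v huv => ?_, fun h u v => if_congr ⟨h u v, comp_adj_imp_symm h u v⟩ rfl rfl⟩
  by_contra hvu
  simpa [huv, hvu] using h u v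

end AdjMatrix

section Components

variable {W : Type*} {G : SimpleGraph V} {K : SimpleGraph W}

theorem supp_connectedComponentMk_eq_range (hK : K.Connected) (f : K ↪g G)
    (hf : ∀ w y, G.Adj (f w) y → y ∈ Set.range f) (w : W) :
    (G.connectedComponentMk (f w)).supp = Set.range f := by
  have hwalk : ∀ {x y : V} (p : G.Walk x y), x ∈ Set.range f → y ∈ Set.range f := by
    intro x y p
    induction p with
    | nil => exact id
    | cons hxz _ ih => rintro ⟨w', rfl⟩; exact ih (hf w' _ hxz)
  ext y
  rw [ConnectedComponent.mem_supp_iff, ConnectedComponent.eq]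
  refine ⟨fun hy => hy.elim fun p => hwalk p.reverse ⟨w, rfl⟩, ?_⟩
  rintro ⟨w', rfl⟩
  exact (hK.preconnected w' w).map f.toHom

theorem nonempty_induce_supp_iso_of_embedding (hK : K.Connected) (f : K ↪g G)
    (hf : ∀ w y, G.Adj (f w) y → y ∈ Set.range f) (w : W) :
    Nonempty (G.induce (G.connectedComponentMk (f w)).supp ≃g K) := by
  rw [supp_connectedComponentMk_eq_range hK f hf]
  exact ⟨f.isoInduceRange.symm⟩

theorem nonempty_induce_supp_iso_bot {v : V} (hv : ∀ y, ¬ G.Adj v y) :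
    Nonempty (G.induce (G.connectedComponentMk v).supp ≃g (⊥ : SimpleGraph (Fin 1))) := by
  have hK : (⊥ : SimpleGraph (Fin 1)).Connected :=
    Subsingleton.elim (⊤ : SimpleGraph (Fin 1)) ⊥ ▸ connected_top
  have hadj : ∀ i j : Fin 1, G.Adj v v ↔ (⊥ : SimpleGraph (Fin 1)).Adj i j := by simp
  exact nonempty_induce_supp_iso_of_embedding hK
    ⟨⟨fun _ => v, fun i j _ => Subsingleton.elim i j⟩, hadj _ _⟩ (fun _ y hy => absurd hy (hv y)) 0

theorem nonempty_induce_supp_iso_top {v w : V} (hvw : G.Adj v w) (hv : ∀ y, G.Adj v y → y = w)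
    (hw : ∀ y, G.Adj w y → y = v) :
    Nonempty (G.induce (G.connectedComponentMk v).supp ≃g (⊤ : SimpleGraph (Fin 2))) := by
  have hinj : Function.Injective ![v, w] := by
    intro i j hij
    fin_cases i <;> fin_cases j <;> simp_all [hvw.ne, hvw.ne.symm]
  have hadj : ∀ i j, G.Adj (![v, w] i) (![v, w] j) ↔ (⊤ : SimpleGraph (Fin 2)).Adj i j := by
    intro i j
    fin_cases i <;> fin_cases j <;> simp [hvw, hvw.symm]
  refine nonempty_induce_supp_iso_of_embedding connected_top ⟨⟨_, hinj⟩, hadj _ _⟩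
    (fun i y hy => ?_) 0
  fin_cases i
  · exact ⟨1, (hv y hy).symm⟩
  · exact ⟨0, (hw y hy).symm⟩

theorem nonempty_induce_supp_iso_cycleGraph_four {a b c d : V} (hac : a ≠ c) (hbd : b ≠ d)
    (hab : G.Adj a b) (hbc : G.Adj b c) (hcd : G.Adj c d) (hda : G.Adj d a)
    (ha : ∀ y, G.Adj a y → y = b ∨ y = d) (hb : ∀ y, G.Adj b y → y = a ∨ y = c)
    (hc : ∀ y, G.Adj c y → y = b ∨ y = d) (hd : ∀ y, G.Adj d y → y = a ∨ y = c) :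
    Nonempty (G.induce (G.connectedComponentMk a).supp ≃g cycleGraph 4) := by
  have hnac : ¬ G.Adj a c := fun h => (ha c h).elim (fun h => hbc.ne h.symm) (fun h => hcd.ne h)
  have hnbd : ¬ G.Adj b d := fun h => (hb d h).elim (fun h => hda.ne h) (fun h => hcd.ne h.symm)
  have hinj : Function.Injective ![a, b, c, d] := by
    intro i j hij
    fin_cases i <;> fin_cases j <;>
      simp_all [hab.ne, hbc.ne, hcd.ne, hda.ne, hab.ne.symm, hbc.ne.symm, hcd.ne.symm,
        hda.ne.symm, hac.symm, hbd.symm]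
  have hadj : ∀ i j, G.Adj (![a, b, c, d] i) (![a, b, c, d] j) ↔ (cycleGraph 4).Adj i j := by
    intro i j
    fin_cases i <;> fin_cases j <;>
      simp +decide [hab, hbc, hcd, hda, hab.symm, hbc.symm, hcd.symm, hda.symm, hnac, hnbd,
        mt G.adj_symm hnac, mt G.adj_symm hnbd]
  refine nonempty_induce_supp_iso_of_embedding cycleGraph_connected ⟨⟨_, hinj⟩, hadj _ _⟩
    (fun i y hy => ?_) 0
  fin_cases i
  · exact (ha y hy).elim (fun h => ⟨1, h.symm⟩) (fun h => ⟨3, h.symm⟩)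
  · exact (hb y hy).elim (fun h => ⟨0, h.symm⟩) (fun h => ⟨2, h.symm⟩)
  · exact (hc y hy).elim (fun h => ⟨1, h.symm⟩) (fun h => ⟨3, h.symm⟩)
  · exact (hd y hy).elim (fun h => ⟨0, h.symm⟩) (fun h => ⟨2, h.symm⟩)

theorem ncard_eq_of_iso {s : Set V} {n : ℕ} {K : SimpleGraph (Fin n)} (e : G.induce s ≃g K) :
    s.ncard = n := by
  rw [← Nat.card_coe_set_eq, Nat.card_congr e.toEquiv, Nat.card_fin]

theorem exists_ne_adj_adj_of_iso_cycleGraph {s : Set V} {n : ℕ}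
    (e : G.induce s ≃g cycleGraph (n + 3)) {x : V} (hx : x ∈ s) :
    ∃ y z, y ≠ z ∧ G.Adj x y ∧ G.Adj x z := by
  have hne : e ⟨x, hx⟩ - 1 ≠ e ⟨x, hx⟩ + 1 :=
    Finset.card_pair_eq_two_iff.1 (cycleGraph_degree_two_le.symm.trans cycleGraph_degree_three_le)
  have hadj : ∀ j, (cycleGraph (n + 3)).Adj (e ⟨x, hx⟩) j → G.Adj x (e.symm j) := fun j hj => by
    simpa using e.symm.map_adj_iff.2 hj
  refine ⟨e.symm (e ⟨x, hx⟩ - 1), e.symm (e ⟨x, hx⟩ + 1),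
    fun h => hne (e.symm.injective (Subtype.ext h)), hadj _ ?_, hadj _ ?_⟩ <;> simp [cycleGraph_adj]

end Components

section Matching

variable {G H : SimpleGraph V}

theorem eq_or_eq_of_sup_adj (hG : ∀ v w w' : V, G.Adj v w → G.Adj v w' → w = w')
    (hH : ∀ v w w' : V, H.Adj v w → H.Adj v w' → w = w') {x p q y : V} (hp : G.Adj x p)
    (hq : H.Adj x q) (hy : (G ⊔ H).Adj x y) : y = p ∨ y = q :=
  hy.imp (hG x y p · hp) (hH x y q · hq)

theorem exists_adj_right_of_sup_adj_of_ne (hG : ∀ v w w' : V, G.Adj v w → G.Adj v w' → w = w')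
    {x y z : V} (hy : (G ⊔ H).Adj x y) (hz : (G ⊔ H).Adj x z) (hyz : y ≠ z) : ∃ q, H.Adj x q := by
  rcases hy with hy | hy
  · rcases hz with hz | hz
    · exact absurd (hG x y z hy hz) hyz
    · exact ⟨z, hz⟩
  · exact ⟨y, hy⟩

theorem nonempty_induce_supp_iso_top_or_cycleGraph_of_adj
    (hG : ∀ v w w' : V, G.Adj v w → G.Adj v w' → w = w')
    (hH : ∀ v w w' : V, H.Adj v w → H.Adj v w' → w = w')
    (hC : ∀ u v, Relation.Comp G.Adj H.Adj u v → Relation.Comp H.Adj G.Adj u v)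
    {v a : V} (ha : G.Adj v a) :
    Nonempty ((G ⊔ H).induce ((G ⊔ H).connectedComponentMk v).supp ≃g (⊤ : SimpleGraph (Fin 2))) ∨
      Nonempty ((G ⊔ H).induce ((G ⊔ H).connectedComponentMk v).supp ≃g cycleGraph 4) := by
  by_cases hb : ∃ b, H.Adj v b ∧ b ≠ a
  · obtain ⟨b, hvb, hba⟩ := hb
    obtain ⟨c, hac, hcb⟩ := hC a b ⟨v, ha.symm, hvb⟩
    have hvc : v ≠ c := by
      rintro rfl
      exact hba (hH v b a hvb hac.symm)
    refine .inr (nonempty_induce_supp_iso_cycleGraph_four hvc hba.symm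
      (.inl ha) (.inr hac) (.inl hcb) (.inr hvb.symm)
      (fun y hy => eq_or_eq_of_sup_adj hG hH ha hvb hy)
      (fun y hy => eq_or_eq_of_sup_adj hG hH ha.symm hac hy)
      (fun y hy => (eq_or_eq_of_sup_adj hG hH hcb hac.symm hy).symm)
      (fun y hy => (eq_or_eq_of_sup_adj hG hH hcb.symm hvb.symm hy).symm))
  · push Not at hb
    refine .inl (nonempty_induce_supp_iso_top (.inl ha) ?_ ?_)
    · rintro y (hy | hy)
      · exact hG v y a hy ha
      · exact hb y hy
    · rintro y (hy | hy)
      · exact hG a y v hy ha.symm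
      · obtain ⟨w, hvw, hwy⟩ := hC v y ⟨a, ha, hy⟩
        exact hG a y v (hb w hvw ▸ hwy) ha.symm

theorem forall_connectedComponent_iso_of_comp_adj
    (hG : ∀ v w w' : V, G.Adj v w → G.Adj v w' → w = w')
    (hH : ∀ v w w' : V, H.Adj v w → H.Adj v w' → w = w')
    (hC : ∀ u v, Relation.Comp G.Adj H.Adj u v → Relation.Comp H.Adj G.Adj u v)
    (c : (G ⊔ H).ConnectedComponent) :
    Nonempty ((G ⊔ H).induce c.supp ≃g (⊥ : SimpleGraph (Fin 1))) ∨
      Nonempty ((G ⊔ H).induce c.supp ≃g (⊤ : SimpleGraph (Fin 2))) ∨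
      Nonempty ((G ⊔ H).induce c.supp ≃g cycleGraph 4) := by
  obtain ⟨v, rfl⟩ := c.exists_rep
  by_cases hGv : ∃ a, G.Adj v a
  · obtain ⟨a, ha⟩ := hGv
    exact .inr (nonempty_induce_supp_iso_top_or_cycleGraph_of_adj hG hH hC ha)
  by_cases hHv : ∃ b, H.Adj v b
  · obtain ⟨b, hb⟩ := hHv
    have := nonempty_induce_supp_iso_top_or_cycleGraph_of_adj hH hG (comp_adj_imp_symm hC) hb
    rw [sup_comm] at this
    exact .inr this
  · exact .inl (nonempty_induce_supp_iso_bot fun y hy => hy.elim (hGv ⟨y, ·⟩) (hHv ⟨y, ·⟩))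

theorem ncard_eq_five_of_alternating_path
    (hG : ∀ v w w' : V, G.Adj v w → G.Adj v w' → w = w')
    (hH : ∀ v w w' : V, H.Adj v w → H.Adj v w' → w = w') {b u w v x : V}
    (hbu : H.Adj b u) (huw : G.Adj u w) (hwv : H.Adj w v) (hvx : G.Adj v x)
    (huv : u ≠ v) (hbx : b ≠ x) : ({b, u, w, v, x} : Set V).ncard = 5 := by
  have hbw : b ≠ w := by
    rintro rfl
    exact huv (hH b u v hbu hwv)
  have hbv : b ≠ v := by
    rintro rfl
    exact huw.ne (hH b u w hbu hwv.symm)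
  have hux : u ≠ x := by
    rintro rfl
    exact hwv.ne (hG u w v huw hvx.symm)
  have hwx : w ≠ x := by
    rintro rfl
    exact huv (hG w u v huw.symm hvx.symm)
  simp [Set.ncard_insert_of_notMem, *, hbu.ne, huw.ne, hwv.ne, hvx.ne]

theorem comp_adj_of_forall_connectedComponent_iso
    (hG : ∀ v w w' : V, G.Adj v w → G.Adj v w' → w = w')
    (hH : ∀ v w w' : V, H.Adj v w → H.Adj v w' → w = w')
    (hcomp : ∀ c : (G ⊔ H).ConnectedComponent,
      Nonempty ((G ⊔ H).induce c.supp ≃g (⊥ : SimpleGraph (Fin 1))) ∨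
        Nonempty ((G ⊔ H).induce c.supp ≃g (⊤ : SimpleGraph (Fin 2))) ∨
        Nonempty ((G ⊔ H).induce c.supp ≃g cycleGraph 4))
    {u v : V} (h : Relation.Comp G.Adj H.Adj u v) : Relation.Comp H.Adj G.Adj u v := by
  obtain ⟨w, huw, hwv⟩ := h
  by_cases huv : u = v
  · subst huv
    exact ⟨w, hwv.symm, huw.symm⟩
  set c := (G ⊔ H).connectedComponentMk u
  have hu : u ∈ c.supp := ConnectedComponent.connectedComponentMk_mem
  have hw : w ∈ c.supp := c.mem_supp_of_adj_mem_supp hu (.inl huw)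
  have hv : v ∈ c.supp := c.mem_supp_of_adj_mem_supp hw (.inr hwv)
  obtain ⟨e⟩ : Nonempty ((G ⊔ H).induce c.supp ≃g cycleGraph 4) := by
    have h3 : ∀ {n} {K : SimpleGraph (Fin n)}, ((G ⊔ H).induce c.supp ≃g K) → 3 ≤ n := by
      intro n K e
      have := Finite.of_equiv _ e.toEquiv.symm
      rw [← ncard_eq_of_iso e, ← Set.ncard_eq_three.2 ⟨u, w, v, huw.ne, huv, hwv.ne, rfl⟩]
      exact Set.ncard_le_ncard (by simp [Set.insert_subset_iff, hu, hw, hv])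
    rcases hcomp c with ⟨⟨e⟩⟩ | ⟨⟨e⟩⟩ | he
    · exact absurd (h3 e) (by norm_num)
    · exact absurd (h3 e) (by norm_num)
    · exact he
  obtain ⟨y, z, hyz, hy, hz⟩ := exists_ne_adj_adj_of_iso_cycleGraph (n := 1) e hu
  obtain ⟨b, hub⟩ := exists_adj_right_of_sup_adj_of_ne hG hy hz hyz
  obtain ⟨y', z', hyz', hy', hz'⟩ := exists_ne_adj_adj_of_iso_cycleGraph (n := 1) e hv
  obtain ⟨x, hvx⟩ := exists_adj_right_of_sup_adj_of_ne hH (Or.symm hy') (Or.symm hz') hyz'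
  obtain rfl : b = x := by
    by_contra hbx
    have hb : b ∈ c.supp := c.mem_supp_of_adj_mem_supp hu (.inr hub)
    have hx : x ∈ c.supp := c.mem_supp_of_adj_mem_supp hv (.inl hvx)
    have := Finite.of_equiv _ e.toEquiv.symm
    have h5 := Set.ncard_le_ncard (by simp [Set.insert_subset_iff, hb, hu, hw, hv, hx] :
      ({b, u, w, v, x} : Set V) ⊆ c.supp)
    rw [ncard_eq_five_of_alternating_path hG hH hub.symm huw hwv hvx huv hbx,
      ncard_eq_of_iso e] at h5
    omega
  exact ⟨b, hub, hvx.symm⟩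

end Matching

end SimpleGraph

theorem stmt_2_general {V : Type*} [Fintype V]
    (M' M'' : SimpleGraph V) [DecidableRel M'.Adj] [DecidableRel M''.Adj]
    (hM' : ∀ v w w' : V, M'.Adj v w → M'.Adj v w' → w = w')
    (hM'' : ∀ v w w' : V, M''.Adj v w → M''.Adj v w' → w = w') :
    M'.adjMatrix ℝ * M''.adjMatrix ℝ = M''.adjMatrix ℝ * M'.adjMatrix ℝ ↔
      ∀ c : (M' ⊔ M'').ConnectedComponent,
        Nonempty (SimpleGraph.induce c.supp (M' ⊔ M'') ≃g (⊥ : SimpleGraph (Fin 1))) ∨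
        Nonempty (SimpleGraph.induce c.supp (M' ⊔ M'') ≃g (⊤ : SimpleGraph (Fin 2))) ∨
        Nonempty (SimpleGraph.induce c.supp (M' ⊔ M'') ≃g SimpleGraph.cycleGraph 4) := by
  rw [SimpleGraph.adjMatrix_mul_comm_iff M' M'' hM' hM'']
  exact ⟨SimpleGraph.forall_connectedComponent_iso_of_comp_adj hM' hM'',
    fun h _ _ => SimpleGraph.comp_adj_of_forall_connectedComponent_iso hM' hM'' h⟩

/-- Let `M' = (V, E')` and `M'' = (V, E'')` be matchings viewed as simple
graphs on a common finite vertex set `V` (no two edges of either graph share a vertex, i.e.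
every vertex has at most one neighbor), with adjacency matrices `A'` and `A''` over `ℝ`.
Then `A'` and `A''` commute if and only if every connected component of the union graph
`(V, E' ∪ E'')` is an isolated vertex (`K₁`), a single edge (`K₂`, the complete graph on two
vertices), or a cycle on 4 vertices (`C₄`). -/
theorem stmt_2 {V : Type*} [Fintype V] [DecidableEq V]
    (M' M'' : SimpleGraph V) [DecidableRel M'.Adj] [DecidableRel M''.Adj]
    (hM' : ∀ v w w' : V, M'.Adj v w → M'.Adj v w' → w = w')
    (hM'' : ∀ v w w' : V, M''.Adj v w → M''.Adj v w' → w = w') :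
    M'.adjMatrix ℝ * M''.adjMatrix ℝ = M''.adjMatrix ℝ * M'.adjMatrix ℝ ↔
      ∀ c : (M' ⊔ M'').ConnectedComponent,
        Nonempty (SimpleGraph.induce c.supp (M' ⊔ M'') ≃g (⊥ : SimpleGraph (Fin 1))) ∨
        Nonempty (SimpleGraph.induce c.supp (M' ⊔ M'') ≃g (⊤ : SimpleGraph (Fin 2))) ∨
        Nonempty (SimpleGraph.induce c.supp (M' ⊔ M'') ≃g SimpleGraph.cycleGraph 4) :=
  stmt_2_general M' M'' hM' hM''
end

section
/- Let u ≠ v be two indices of a finite type V, and over ℂ let A = E_{uv} + E_{vu}, where E_{xy} denotes the V × V matrix with a 1 in position (x, y) and 0 elsewhere (A is the adjacency matrix of the single edge uv). Then for every t ∈ ℝ, the matrix exponential satisfies exp(−itA) = 1 + (cos t − 1)(E_{uu} + E_{vv}) − i (sin t)(E_{uv} + E_{vu}); that is, exp(−itA) acts as the rotation Rx(2t) = !![cos t, −i sin t; −i sin t, cos t] on the two-dimensional subspace spanned by the basis vectors indexed by u and v, and as the identity on its complement. -/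
open Matrix

section PowThreeEqSelf

variable {M : Type*} [Monoid M] {a : M}

theorem pow_two_mul_add_one_of_pow_three_eq_self (h : a ^ 3 = a) (k : ℕ) :
    a ^ (2 * k + 1) = a := by
  induction k with
  | zero => simp
  | succ k ih => rw [show 2 * (k + 1) + 1 = 2 * k + 1 + 2 by ring, pow_add, ih, ← pow_succ', h]

theorem pow_two_mul_of_pow_three_eq_self (h : a ^ 3 = a) {k : ℕ} (hk : k ≠ 0) :
    a ^ (2 * k) = a ^ 2 := by
  obtain ⟨k, rfl⟩ := Nat.exists_eq_succ_of_ne_zero hk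
  rw [show 2 * (k + 1) = 2 * k + 1 + 1 by ring, pow_succ,
    pow_two_mul_add_one_of_pow_three_eq_self h, sq]

end PowThreeEqSelf

/-- On an element with `a ^ 3 = a`, the exponential series splits into the series of `cosh`
(on `a ^ 2`, apart from the constant term) and of `sinh` (on `a`). -/
theorem NormedSpace.exp_smul_of_pow_three_eq_self {𝔸 : Type*} [Ring 𝔸] [Algebra ℂ 𝔸]
    [TopologicalSpace 𝔸] [IsTopologicalRing 𝔸] [ContinuousSMul ℂ 𝔸] [T2Space 𝔸]
    {a : 𝔸} (h : a ^ 3 = a) (z : ℂ) :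
    NormedSpace.exp (z • a) = 1 + (Complex.cosh z - 1) • a ^ 2 + Complex.sinh z • a := by
  rw [NormedSpace.exp_eq_tsum ℂ]
  refine HasSum.tsum_eq (HasSum.even_add_odd ?_ ?_)
  · have hcosh := ((Complex.hasSum_cosh z).smul_const (a ^ 2)).add
      (hasSum_ite_eq 0 (1 - a ^ 2 : 𝔸))
    convert hcosh using 1
    · funext k
      rcases eq_or_ne k 0 with rfl | hk
      · simp
      · rw [smul_pow, pow_two_mul_of_pow_three_eq_self h hk, smul_smul, if_neg hk, add_zero,
          div_eq_inv_mul]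
    · module
  · convert (Complex.hasSum_sinh z).smul_const a using 2 with k
    rw [smul_pow, pow_two_mul_add_one_of_pow_three_eq_self h, smul_smul, div_eq_inv_mul]

section SingleEdge

variable {V R : Type*} [Fintype V] [DecidableEq V] [Semiring R] {u v : V}

theorem single_add_single_swap_sq (huv : u ≠ v) :
    (single u v (1 : R) + single v u 1) ^ 2 = single u u 1 + single v v 1 := by
  rw [sq, add_mul, mul_add, mul_add, single_mul_single_of_ne _ _ _ _ huv.symm,
    single_mul_single_of_ne _ _ _ _ huv, single_mul_single_same, single_mul_single_same]
  simp [add_comm]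

theorem single_add_single_swap_pow_three (huv : u ≠ v) :
    (single u v (1 : R) + single v u 1) ^ 3 = single u v 1 + single v u 1 := by
  rw [pow_succ, single_add_single_swap_sq huv, add_mul, mul_add, mul_add,
    single_mul_single_of_ne _ _ _ _ huv, single_mul_single_of_ne _ _ _ _ huv.symm,
    single_mul_single_same, single_mul_single_same]
  simp

end SingleEdge

/-- Let `u ≠ v` be indices of a finite type `V` and, over `ℂ`, let
`A = E_{uv} + E_{vu}` (the adjacency matrix of the single edge `uv`, where `E_{xy}` is the
standard basis matrix with a `1` in position `(x, y)`). Then for every `t ∈ ℝ`,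
`exp(−itA) = 1 + (cos t − 1)(E_{uu} + E_{vv}) − i (sin t)(E_{uv} + E_{vu})`;
that is, `exp(−itA)` acts as `Rx(2t)` on the span of the basis vectors indexed by `u` and `v`
and as the identity on its complement. -/
theorem stmt_9 {V : Type*} [Fintype V] [DecidableEq V] (u v : V) (huv : u ≠ v) (t : ℝ) :
    NormedSpace.exp
        ((-(Complex.I * (t : ℂ))) •
          (Matrix.single u v (1 : ℂ) + Matrix.single v u (1 : ℂ))) =
      1 + ((Real.cos t : ℂ) - 1) •
            (Matrix.single u u (1 : ℂ) + Matrix.single v v (1 : ℂ))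
        - (Complex.I * (Real.sin t : ℂ)) •
            (Matrix.single u v (1 : ℂ) + Matrix.single v u (1 : ℂ)) := by
  rw [NormedSpace.exp_smul_of_pow_three_eq_self (single_add_single_swap_pow_three huv),
    single_add_single_swap_sq huv, mul_comm, Complex.cosh_neg, Complex.sinh_neg,
    Complex.cosh_mul_I, Complex.sinh_mul_I, Complex.ofReal_cos, Complex.ofReal_sin, mul_comm]
  module
end

section
/- Let n be a natural number with n ≥ 1. The complete bipartite graph K_{n,n} is decomposable into commuting perfect matchings — that is, its edge set can be partitioned into perfect matchings whose adjacency matrices pairwise commute — if and only if n is a power of 2. -/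
open Matrix
open scoped Classical

/-- A finite simple graph `G` is *decomposable into commuting perfect matchings* if its edge
set can be partitioned into perfect matchings (sets of pairwise vertex-disjoint edges covering
every vertex, i.e. each vertex is matched to exactly one vertex) whose adjacency matrices
(over `ℝ`) pairwise commute. -/
def DecomposableIntoCommutingPerfectMatchings {V : Type*} [Fintype V] [DecidableEq V]
    (G : SimpleGraph V) : Prop :=
  ∃ (k : ℕ) (M : Fin k → SimpleGraph V),
    (∀ i, M i ≤ G) ∧
    (∀ i, ∀ v : V, ∃! w : V, (M i).Adj v w) ∧
    (∀ i j, i ≠ j → Disjoint (M i).edgeSet (M j).edgeSet) ∧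
    (⋃ i, (M i).edgeSet) = G.edgeSet ∧
    (∀ i j, Commute ((M i).adjMatrix ℝ) ((M j).adjMatrix ℝ))

/-!
A perfect matching of `K_{α,α}` is the graph of a permutation of `α`, and the adjacency matrices
of the matchings of `σ` and `τ` commute exactly when `τ⁻¹ * σ = σ⁻¹ * τ`. A decomposition is
therefore a set `S` of such permutations sending each point to each point exactly once. For a
fixed `a ∈ S` the elements `a⁻¹ * σ` (`σ ∈ S`) are pairwise commuting involutions, so they generate
a 2-group acting transitively on `α`, and `|α|` is a power of 2. Conversely, the translations of
`(ℤ/2)^m` form such a set.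
-/

open Equiv

section Group

variable {G : Type*} [Group G]

theorem inv_mul_mul_inv_mul_of_inv_mul_comm {a b : G} (h : a⁻¹ * b = b⁻¹ * a) (c : G) :
    a⁻¹ * b * (a⁻¹ * c) = b⁻¹ * c := by
  rw [h]; group

theorem Subgroup.sq_eq_one_of_mem_closure {s : Set G} (hcomm : ∀ x ∈ s, ∀ y ∈ s, x * y = y * x)
    (hsq : ∀ x ∈ s, x ^ 2 = 1) {g : G} (hg : g ∈ closure s) : g ^ 2 = 1 := by
  have := isMulCommutative_closure hcomm
  induction hg using closure_induction with
  | mem x hx => exact hsq x hx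
  | one => exact one_pow 2
  | mul x y hx hy hx2 hy2 =>
    have hxy : Commute x y := congrArg Subtype.val (mul_comm' (⟨x, hx⟩ : closure s) ⟨y, hy⟩)
    rw [hxy.mul_pow 2, hx2, hy2, one_mul]
  | inv x _ hx2 => rw [inv_pow, hx2, inv_one]

theorem exists_card_eq_two_pow_of_inv_mul_comm {X : Type*} [MulAction G X] [Finite X] {S : Set G}
    (hS : ∀ s ∈ S, ∀ t ∈ S, t⁻¹ * s = s⁻¹ * t) (x : X) (hx : ∀ y, ∃ s ∈ S, s • x = y) :
    ∃ m, Nat.card X = 2 ^ m := by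
  obtain ⟨a, ha, -⟩ := hx x
  let T := (a⁻¹ * ·) '' S
  have hT_mul : ∀ s ∈ S, ∀ t ∈ S, a⁻¹ * s * (a⁻¹ * t) = s⁻¹ * t := fun s hs _ _ =>
    inv_mul_mul_inv_mul_of_inv_mul_comm (hS s hs a ha) _
  have hT_comm : ∀ u ∈ T, ∀ v ∈ T, u * v = v * u := by
    rintro _ ⟨s, hs, rfl⟩ _ ⟨t, ht, rfl⟩
    rw [hT_mul s hs t ht, hT_mul t ht s hs, hS s hs t ht]
  have hT_sq : ∀ u ∈ T, u ^ 2 = 1 := by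
    rintro _ ⟨s, hs, rfl⟩
    rw [sq, hT_mul s hs s hs, inv_mul_cancel]
  have hH : IsPGroup 2 (Subgroup.closure T) := fun g =>
    ⟨1, Subtype.ext (Subgroup.sq_eq_one_of_mem_closure hT_comm hT_sq g.2)⟩
  have horbit : MulAction.orbit (Subgroup.closure T) x = Set.univ := by
    refine Set.eq_univ_of_forall fun y => ?_
    obtain ⟨s, hs, hsy⟩ := hx (a • y)
    refine ⟨⟨a⁻¹ * s, Subgroup.subset_closure ⟨s, hs, rfl⟩⟩, ?_⟩
    simp [Subgroup.smul_def, mul_smul, hsy]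
  obtain ⟨m, hm⟩ := hH.card_orbit x
  exact ⟨m, by rwa [horbit, Nat.card_univ] at hm⟩

end Group

namespace SimpleGraph

variable {α : Type*}

def permMatching (σ : Perm α) : SimpleGraph (α ⊕ α) where
  Adj
    | .inl x, .inr y => σ x = y
    | .inr y, .inl x => σ x = y
    | _, _ => False
  symm := ⟨by rintro (x | x) (y | y) h <;> exact h⟩
  loopless := ⟨by rintro (x | x) h <;> exact h⟩

variable {σ τ : Perm α} {x y : α}

@[simp] theorem permMatching_adj_inl_inr : (permMatching σ).Adj (.inl x) (.inr y) ↔ σ x = y :=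
  .rfl

@[simp] theorem permMatching_adj_inr_inl : (permMatching σ).Adj (.inr y) (.inl x) ↔ σ x = y :=
  .rfl

@[simp] theorem not_permMatching_adj_inl_inl : ¬(permMatching σ).Adj (.inl x) (.inl y) :=
  id

@[simp] theorem not_permMatching_adj_inr_inr : ¬(permMatching σ).Adj (.inr x) (.inr y) :=
  id

theorem permMatching_le : permMatching σ ≤ completeBipartiteGraph α α := by
  rintro (x | x) (y | y) h <;> simp_all

theorem existsUnique_permMatching_adj (σ : Perm α) (v : α ⊕ α) :
    ∃! w, (permMatching σ).Adj v w := by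
  rcases v with x | y
  · refine ⟨.inr (σ x), rfl, ?_⟩
    rintro (z | z) h
    · simp at h
    · simp_all
  · refine ⟨.inl (σ.symm y), by simp, ?_⟩
    rintro (z | z) h
    · simp [← (permMatching_adj_inr_inl.mp h)]
    · simp at h

theorem exists_eq_permMatching {M : SimpleGraph (α ⊕ α)} (hM : M ≤ completeBipartiteGraph α α)
    (hperfect : ∀ v, ∃! w, M.Adj v w) : ∃ σ : Perm α, M = permMatching σ := by
  have hll : ∀ x y, ¬M.Adj (.inl x) (.inl y) := fun x y h => by simpa using hM h
  have hrr : ∀ x y, ¬M.Adj (.inr x) (.inr y) := fun x y h => by simpa using hM h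
  have hpartner : ∀ x, ∃ y, M.Adj (.inl x) (.inr y) := fun x => by
    obtain ⟨w | w, hw, -⟩ := hperfect (.inl x)
    exacts [(hll _ _ hw).elim, ⟨w, hw⟩]
  choose f hf using hpartner
  have hf_unique : ∀ x y, M.Adj (.inl x) (.inr y) → f x = y := fun x y h => by
    simpa using (hperfect (.inl x)).unique (hf x) h
  have hbij : Function.Bijective f := by
    refine ⟨fun x x' hxx' => ?_, fun y => ?_⟩
    · have h := (hperfect (.inr (f x))).unique (hf x).symm (hxx' ▸ (hf x').symm)
      simpa using h
    · obtain ⟨w | w, hw, -⟩ := hperfect (.inr y)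
      exacts [⟨w, hf_unique w y hw.symm⟩, (hrr _ _ hw).elim]
  refine ⟨Equiv.ofBijective f hbij, ?_⟩
  ext (x | x) (y | y)
  · simpa using hll x y
  · exact ⟨hf_unique x y, fun h => h ▸ hf x⟩
  · rw [M.adj_comm]
    exact ⟨hf_unique y x, fun h => h ▸ hf y⟩
  · simpa using hrr x y

theorem disjoint_edgeSet_permMatching_iff :
    Disjoint (permMatching σ).edgeSet (permMatching τ).edgeSet ↔ ∀ x, σ x ≠ τ x := by
  refine ⟨fun h x hx => ?_, fun h => Set.disjoint_left.mpr ?_⟩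
  · exact (Set.disjoint_left.mp h) (a := s(.inl x, .inr (σ x))) rfl (by simp [hx])
  · rintro e he he'
    induction e using Sym2.ind with
    | _ u v =>
      rcases u with x | x <;> rcases v with y | y <;>
        simp only [mem_edgeSet, permMatching_adj_inl_inr, permMatching_adj_inr_inl] at he he'
      · simp at he
      · exact h x (he.trans he'.symm)
      · exact h y (he.trans he'.symm)
      · simp at he

theorem iUnion_edgeSet_permMatching_eq_iff {ι : Type*} {σ : ι → Perm α} :
    (⋃ i, (permMatching (σ i)).edgeSet) = (completeBipartiteGraph α α).edgeSet ↔
      ∀ x y, ∃ i, σ i x = y := by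
  refine ⟨fun h x y => ?_, fun h => ?_⟩
  · have hxy : s(.inl x, .inr y) ∈ ⋃ i, (permMatching (σ i)).edgeSet := by rw [h]; simp
    simpa using hxy
  · ext e
    induction e using Sym2.ind with
    | _ u v => rcases u with x | x <;> rcases v with y | y <;> simp [h]

variable [DecidableEq α] (R : Type*)

theorem adjMatrix_permMatching [Zero R] [One R] (σ : Perm α) :
    (permMatching σ).adjMatrix R = fromBlocks 0 (σ.permMatrix R) (σ⁻¹.permMatrix R) 0 := by
  ext (x | x) (y | y) <;> simp [PEquiv.toMatrix_apply, Equiv.eq_symm_apply, eq_comm]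

variable {R}

theorem _root_.Equiv.Perm.permMatrix_injective [MulZeroOneClass R] [Nontrivial R] :
    Function.Injective fun σ : Perm α => σ.permMatrix R :=
  PEquiv.toMatrix_injective.comp fun _ _ h =>
    Equiv.ext fun x => Option.some_injective _ (congrFun (congrArg DFunLike.coe h) x)

theorem commute_adjMatrix_permMatching_iff [Fintype α] [NonAssocSemiring R] [Nontrivial R] :
    Commute ((permMatching σ).adjMatrix R) ((permMatching τ).adjMatrix R) ↔
      τ⁻¹ * σ = σ⁻¹ * τ := by
  simp only [commute_iff_eq, adjMatrix_permMatching, fromBlocks_multiply, zero_mul, mul_zero,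
    add_zero, zero_add, ← permMatrix_mul, fromBlocks_inj, Perm.permMatrix_injective.eq_iff,
    true_and]
  refine ⟨And.left, fun h => ⟨h, ?_⟩⟩
  calc τ * σ⁻¹ = σ * (σ⁻¹ * τ) * σ⁻¹ := by group
    _ = σ * (τ⁻¹ * σ) * σ⁻¹ := by rw [h]
    _ = σ * τ⁻¹ := by group

end SimpleGraph

open SimpleGraph

variable {α : Type*}

def IsSharplyTransitive (S : Set (Perm α)) : Prop :=
  ∀ x y, ∃! σ, σ ∈ S ∧ σ x = y

theorem decomposable_completeBipartiteGraph_iff [Fintype α] [DecidableEq α] :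
    DecomposableIntoCommutingPerfectMatchings (completeBipartiteGraph α α) ↔
      ∃ S : Set (Perm α), IsSharplyTransitive S ∧ ∀ σ ∈ S, ∀ τ ∈ S, τ⁻¹ * σ = σ⁻¹ * τ := by
  constructor
  · rintro ⟨k, M, hle, hperfect, hdisj, hunion, hcomm⟩
    choose σ hσ using fun i => exists_eq_permMatching (hle i) (hperfect i)
    obtain rfl : M = fun i => permMatching (σ i) := funext hσ
    refine ⟨Set.range σ, fun x y => ?_, ?_⟩
    · obtain ⟨i, hi⟩ := iUnion_edgeSet_permMatching_eq_iff.mp hunion x y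
      refine ⟨σ i, ⟨⟨i, rfl⟩, hi⟩, ?_⟩
      rintro _ ⟨⟨j, rfl⟩, hj⟩
      by_contra hji
      exact disjoint_edgeSet_permMatching_iff.mp (hdisj j i (ne_of_apply_ne σ hji)) x
        (hj.trans hi.symm)
    · rintro _ ⟨i, rfl⟩ _ ⟨j, rfl⟩
      exact commute_adjMatrix_permMatching_iff.mp (hcomm i j)
  · rintro ⟨S, hS, hinv⟩
    let e := Finite.equivFin S
    refine ⟨Nat.card S, fun i => permMatching (e.symm i), fun _ => permMatching_le,
      fun i => existsUnique_permMatching_adj _, fun i j hij => ?_, ?_, fun i j => ?_⟩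
    · refine disjoint_edgeSet_permMatching_iff.mpr fun x hx => hij (e.symm.injective ?_)
      exact Subtype.ext ((hS x _).unique ⟨(e.symm i).2, hx⟩ ⟨(e.symm j).2, rfl⟩)
    · refine iUnion_edgeSet_permMatching_eq_iff.mpr fun x y => ?_
      obtain ⟨σ, ⟨hσ, hσx⟩, -⟩ := hS x y
      exact ⟨e ⟨σ, hσ⟩, by rw [Equiv.symm_apply_apply]; exact hσx⟩
    · exact commute_adjMatrix_permMatching_iff.mpr (hinv _ (e.symm i).2 _ (e.symm j).2)

theorem exists_isSharplyTransitive_of_equiv {G : Type*} [AddGroup G] (hG : ∀ a : G, -a = a)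
    (e : α ≃ G) :
    ∃ S : Set (Perm α), IsSharplyTransitive S ∧ ∀ σ ∈ S, ∀ τ ∈ S, τ⁻¹ * σ = σ⁻¹ * τ := by
  let translate (a : G) : Perm α := (e.trans (Equiv.addRight a)).trans e.symm
  have htranslate : ∀ a b, (translate b)⁻¹ * translate a = translate (a - b) := by
    intro a b; ext x; simp [translate, add_assoc, sub_eq_add_neg]
  refine ⟨Set.range translate,
    fun x y => ⟨translate (-e x + e y), ⟨⟨_, rfl⟩, by simp [translate]⟩, ?_⟩, ?_⟩
  · rintro _ ⟨⟨a, rfl⟩, h⟩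
    simp only [translate, trans_apply, coe_addRight, symm_apply_eq] at h
    rw [eq_neg_add_of_add_eq h]
  · rintro _ ⟨a, rfl⟩ _ ⟨b, rfl⟩
    rw [htranslate, htranslate, ← neg_sub, hG]

/-- For `n ≥ 1`, the complete bipartite graph `K_{n,n}` is decomposable into
commuting perfect matchings if and only if `n` is a power of `2`. -/
theorem stmt_12 (n : ℕ) (hn : 1 ≤ n) :
    DecomposableIntoCommutingPerfectMatchings
        (completeBipartiteGraph (Fin n) (Fin n)) ↔
      ∃ m : ℕ, n = 2 ^ m := by
  rw [decomposable_completeBipartiteGraph_iff]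
  constructor
  · rintro ⟨S, hS, hinv⟩
    obtain ⟨m, hm⟩ := exists_card_eq_two_pow_of_inv_mul_comm hinv (⟨0, hn⟩ : Fin n)
      fun y => (hS _ y).exists
    exact ⟨m, by simpa using hm⟩
  · rintro ⟨m, rfl⟩
    exact exists_isSharplyTransitive_of_equiv (G := Fin m → ZMod 2)
      (fun a => funext fun i => ZMod.neg_eq_self_mod_two (a i)) (Fintype.equivOfCardEq (by simp))
end

section
/- Let G be a finite k-regular simple graph. Then G is decomposable into commuting perfect matchings — i.e., its edge set can be partitioned into perfect matchings whose adjacency matrices pairwise commute — if and only if G has a 1-factorization (a partition of its edge set into k perfect matchings) such that the union of any two distinct perfect matchings in the 1-factorization is a disjoint union of copies of the 4-cycle C₄. -/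
open Matrix
open scoped Classical

namespace Stmt13Aux

variable {V : Type*} [Fintype V] [DecidableEq V]

noncomputable def pm {M : SimpleGraph V} (h : ∀ v : V, ∃! w : V, M.Adj v w) (v : V) : V :=
  (h v).exists.choose

lemma pm_adj {M : SimpleGraph V} (h : ∀ v : V, ∃! w : V, M.Adj v w) (v : V) :
    M.Adj v (pm h v) := (h v).exists.choose_spec

lemma adj_iff_pm {M : SimpleGraph V} (h : ∀ v : V, ∃! w : V, M.Adj v w) {v w : V} :
    M.Adj v w ↔ w = pm h v := by
  constructor
  · intro ha
    exact (h v).unique ha (pm_adj h v)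
  · rintro rfl; exact pm_adj h v

lemma pm_pm {M : SimpleGraph V} (h : ∀ v : V, ∃! w : V, M.Adj v w) (v : V) :
    pm h (pm h v) = v := ((adj_iff_pm h).mp (pm_adj h v).symm).symm

lemma pm_ne {M : SimpleGraph V} (h : ∀ v : V, ∃! w : V, M.Adj v w) (v : V) :
    pm h v ≠ v := (pm_adj h v).ne'

lemma pm_inj {M : SimpleGraph V} (h : ∀ v : V, ∃! w : V, M.Adj v w) {v w : V}
    (hvw : pm h v = pm h w) : v = w := by
  have := pm_pm h v
  rw [hvw, pm_pm h w] at this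
  exact this.symm

lemma neighborFinset_pm {M : SimpleGraph V} (h : ∀ v : V, ∃! w : V, M.Adj v w) (v : V) :
    M.neighborFinset v = {pm h v} := by
  ext w
  simp [SimpleGraph.mem_neighborFinset, adj_iff_pm h]

lemma mul_entry {M N : SimpleGraph V} (hM : ∀ v : V, ∃! w : V, M.Adj v w)
    (hN : ∀ v : V, ∃! w : V, N.Adj v w) (u w : V) :
    (M.adjMatrix ℝ * N.adjMatrix ℝ) u w = if w = pm hN (pm hM u) then 1 else 0 := by
  rw [SimpleGraph.adjMatrix_mul_apply, neighborFinset_pm hM, Finset.sum_singleton,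
    SimpleGraph.adjMatrix_apply]
  simp [adj_iff_pm hN]

lemma commute_iff {M N : SimpleGraph V} (hM : ∀ v : V, ∃! w : V, M.Adj v w)
    (hN : ∀ v : V, ∃! w : V, N.Adj v w) :
    Commute (M.adjMatrix ℝ) (N.adjMatrix ℝ) ↔
      ∀ u, pm hN (pm hM u) = pm hM (pm hN u) := by
  constructor
  · intro hc u
    have h2 := congrFun (congrFun hc u) (pm hN (pm hM u))
    rw [mul_entry hM hN, mul_entry hN hM] at h2
    by_contra hne
    rw [if_pos rfl, if_neg hne] at h2
    exact one_ne_zero h2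
  · intro h
    show _ * _ = _ * _
    ext u w
    rw [mul_entry hM hN, mul_entry hN hM, h u]

lemma walk_closed {W : Type*} {G : SimpleGraph W} {S : Set W}
    (hS : ∀ x ∈ S, ∀ y, G.Adj x y → y ∈ S) :
    ∀ {x y : W}, G.Walk x y → x ∈ S → y ∈ S := by
  intro x y p
  induction p with
  | nil => exact id
  | cons h _ ih => exact fun hx => ih (hS _ hx _ h)

lemma iso_c4 {G : SimpleGraph V} {S : Set V} {a b c d : V}
    (hS : S = {a, b, c, d})
    (hab : a ≠ b) (hac : a ≠ c) (had : a ≠ d) (hbc : b ≠ c) (hbd : b ≠ d) (hcd : c ≠ d)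
    (h1 : G.Adj a b) (h2 : G.Adj b c) (h3 : G.Adj c d) (h4 : G.Adj d a)
    (h5 : ¬ G.Adj a c) (h6 : ¬ G.Adj b d) :
    Nonempty (SimpleGraph.induce S G ≃g SimpleGraph.cycleGraph 4) := by
  subst hS
  set S : Set V := {a, b, c, d} with hSdef
  have mema : a ∈ S := by simp [hSdef]
  have memb : b ∈ S := by simp [hSdef]
  have memc : c ∈ S := by simp [hSdef]
  have memd : d ∈ S := by simp [hSdef]
  let F : Fin 4 → S := ![⟨a, mema⟩, ⟨b, memb⟩, ⟨c, memc⟩, ⟨d, memd⟩]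
  have hbij : Function.Bijective F := by
    constructor
    · intro i j hij
      fin_cases i <;> fin_cases j <;>
        simp_all [F, Subtype.ext_iff] <;>
        first
          | rfl
          | (exact absurd hij hab) | (exact absurd hij hac) | (exact absurd hij had)
          | (exact absurd hij hbc) | (exact absurd hij hbd) | (exact absurd hij hcd)
          | (exact absurd hij.symm hab) | (exact absurd hij.symm hac)
          | (exact absurd hij.symm had) | (exact absurd hij.symm hbc)
          | (exact absurd hij.symm hbd) | (exact absurd hij.symm hcd)
    · rintro ⟨v, hv⟩
      rcases hv with rfl | rfl | rfl | rfl
      · exact ⟨0, rfl⟩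
      · exact ⟨1, rfl⟩
      · exact ⟨2, rfl⟩
      · exact ⟨3, rfl⟩
  refine ⟨(RelIso.mk (Equiv.ofBijective F hbij) ?_).symm⟩
  intro i j
  show (SimpleGraph.induce S G).Adj (F i) (F j) ↔ (SimpleGraph.cycleGraph 4).Adj i j
  have hadj : ∀ (x y : S), (SimpleGraph.induce S G).Adj x y ↔ G.Adj x.1 y.1 := by
    intro x y; rfl
  have htrue : ∀ (x y : V), G.Adj x y → (G.Adj x y ↔ True) := fun _ _ h => iff_true_intro h
  fin_cases i <;> fin_cases j <;>
    simp only [F, Matrix.cons_val_zero, Matrix.cons_val_one, Matrix.head_cons,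
      Matrix.cons_val_two, Matrix.tail_cons, Matrix.cons_val_three, hadj] <;>
    first
      | (refine iff_of_true ?_ (by decide)
         first
           | exact h1
           | exact h2
           | exact h3
           | exact h4
           | exact h1.symm
           | exact h2.symm
           | exact h3.symm
           | exact h4.symm)
      | (refine iff_of_false (fun hh => ?_) (by decide)
         first
           | exact absurd hh (G.irrefl)
           | exact absurd hh h5
           | exact absurd hh h6
           | exact absurd hh.symm h5
           | exact absurd hh.symm h6)

end Stmt13Aux

namespace Stmt13Aux

variable {V : Type*} [Fintype V] [DecidableEq V]

lemma sup_adj_iff {M N : SimpleGraph V} (hM : ∀ v : V, ∃! w : V, M.Adj v w)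
    (hN : ∀ v : V, ∃! w : V, N.Adj v w) {x y : V} :
    (M ⊔ N).Adj x y ↔ y = pm hM x ∨ y = pm hN x := by
  rw [SimpleGraph.sup_adj, adj_iff_pm hM, adj_iff_pm hN]

lemma pm_ne_pm {M N : SimpleGraph V} (hM : ∀ v : V, ∃! w : V, M.Adj v w)
    (hN : ∀ v : V, ∃! w : V, N.Adj v w)
    (hdisj : Disjoint M.edgeSet N.edgeSet) (v : V) : pm hM v ≠ pm hN v := by
  intro h
  have h1 : s(v, pm hM v) ∈ M.edgeSet := (SimpleGraph.mem_edgeSet M).mpr (pm_adj hM v)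
  have h2 : s(v, pm hM v) ∈ N.edgeSet := by
    rw [h]; exact (SimpleGraph.mem_edgeSet N).mpr (pm_adj hN v)
  exact Set.disjoint_left.mp hdisj h1 h2

lemma supp_mk_eq {M N : SimpleGraph V} (hM : ∀ v : V, ∃! w : V, M.Adj v w)
    (hN : ∀ v : V, ∃! w : V, N.Adj v w)
    (hcomm : ∀ u, pm hN (pm hM u) = pm hM (pm hN u)) (u : V) :
    ((M ⊔ N).connectedComponentMk u).supp
      = {u, pm hM u, pm hN (pm hM u), pm hN u} := by
  ext v
  rw [SimpleGraph.ConnectedComponent.mem_supp_iff, SimpleGraph.ConnectedComponent.eq]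
  constructor
  · intro hreach
    obtain ⟨p⟩ := hreach.symm
    refine walk_closed (S := {u, pm hM u, pm hN (pm hM u), pm hN u}) ?_ p (by simp)
    intro x hx y hy
    rw [sup_adj_iff hM hN] at hy
    simp only [Set.mem_insert_iff, Set.mem_singleton_iff] at hx ⊢
    rcases hx with rfl | rfl | rfl | rfl <;> rcases hy with rfl | rfl
    · exact Or.inr (Or.inl rfl)
    · exact Or.inr (Or.inr (Or.inr rfl))
    · rw [pm_pm hM u]; exact Or.inl rfl
    · exact Or.inr (Or.inr (Or.inl rfl))
    · rw [← hcomm (pm hM u), pm_pm hM u]; exact Or.inr (Or.inr (Or.inr rfl))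
    · rw [pm_pm hN (pm hM u)]; exact Or.inr (Or.inl rfl)
    · rw [← hcomm u]; exact Or.inr (Or.inr (Or.inl rfl))
    · rw [pm_pm hN u]; exact Or.inl rfl
  · intro hv
    simp only [Set.mem_insert_iff, Set.mem_singleton_iff] at hv
    have r1 : (M ⊔ N).Reachable u (pm hM u) :=
      ((sup_adj_iff hM hN).mpr (Or.inl rfl)).reachable
    have r2 : (M ⊔ N).Reachable u (pm hN u) :=
      ((sup_adj_iff hM hN).mpr (Or.inr rfl)).reachable
    have r3 : (M ⊔ N).Reachable u (pm hN (pm hM u)) :=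
      r1.trans ((sup_adj_iff hM hN).mpr (Or.inr rfl)).reachable
    rcases hv with rfl | rfl | rfl | rfl
    · rfl
    · exact r1.symm
    · exact r3.symm
    · exact r2.symm

lemma components_c4 {M N : SimpleGraph V} (hM : ∀ v : V, ∃! w : V, M.Adj v w)
    (hN : ∀ v : V, ∃! w : V, N.Adj v w)
    (hcomm : ∀ u, pm hN (pm hM u) = pm hM (pm hN u))
    (hdisj : Disjoint M.edgeSet N.edgeSet) :
    ∀ c : (M ⊔ N).ConnectedComponent,
      Nonempty (SimpleGraph.induce c.supp (M ⊔ N) ≃g SimpleGraph.cycleGraph 4) := by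
  have hne := pm_ne_pm hM hN hdisj
  refine SimpleGraph.ConnectedComponent.ind (fun u => ?_)
  have fb : pm hM (pm hM u) = u := pm_pm hM u
  have gd : pm hN (pm hN u) = u := pm_pm hN u
  have hab : u ≠ pm hM u := (pm_ne hM u).symm
  have had : u ≠ pm hN u := (pm_ne hN u).symm
  have hbc : pm hM u ≠ pm hN (pm hM u) := (pm_ne hN (pm hM u)).symm
  have hbd : pm hM u ≠ pm hN u := hne u
  have hac : u ≠ pm hN (pm hM u) := by
    intro h
    apply hne u
    have h2 := congrArg (pm hN) h
    rw [pm_pm hN (pm hM u)] at h2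
    exact h2.symm
  have hcd : pm hN (pm hM u) ≠ pm hN u := fun h => pm_ne hM u (pm_inj hN h)
  have h1 : (M ⊔ N).Adj u (pm hM u) := (sup_adj_iff hM hN).mpr (Or.inl rfl)
  have h2 : (M ⊔ N).Adj (pm hM u) (pm hN (pm hM u)) :=
    (sup_adj_iff hM hN).mpr (Or.inr rfl)
  have h3 : (M ⊔ N).Adj (pm hN (pm hM u)) (pm hN u) := by
    refine (sup_adj_iff hM hN).mpr (Or.inl ?_)
    rw [← hcomm (pm hM u), fb]
  have h4 : (M ⊔ N).Adj (pm hN u) u := by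
    refine (sup_adj_iff hM hN).mpr (Or.inr ?_)
    rw [gd]
  have h5 : ¬ (M ⊔ N).Adj u (pm hN (pm hM u)) := by
    rw [sup_adj_iff hM hN]
    rintro (h | h)
    · exact hbc h.symm
    · exact pm_ne hM u (pm_inj hN h)
  have h6 : ¬ (M ⊔ N).Adj (pm hM u) (pm hN u) := by
    rw [sup_adj_iff hM hN]
    rintro (h | h)
    · rw [fb] at h; exact had h.symm
    · exact hab (pm_inj hN h)
  exact iso_c4 (supp_mk_eq hM hN hcomm u) hab hac had hbc hbd hcd h1 h2 h3 h4 h5 h6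

end Stmt13Aux

namespace Stmt13Aux

variable {V : Type*} [Fintype V] [DecidableEq V]

lemma comm_of_c4 {M N : SimpleGraph V} (hM : ∀ v : V, ∃! w : V, M.Adj v w)
    (hN : ∀ v : V, ∃! w : V, N.Adj v w)
    (hdisj : Disjoint M.edgeSet N.edgeSet)
    (hC : ∀ c : (M ⊔ N).ConnectedComponent,
      Nonempty (SimpleGraph.induce c.supp (M ⊔ N) ≃g SimpleGraph.cycleGraph 4)) :
    ∀ u, pm hN (pm hM u) = pm hM (pm hN u) := by
  have hne := pm_ne_pm hM hN hdisj
  intro u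
  set c := (M ⊔ N).connectedComponentMk u with hcdef
  obtain ⟨iso⟩ := hC c
  have hcard4 : Fintype.card c.supp = 4 := by
    rw [Fintype.card_congr iso.toEquiv, Fintype.card_fin]
  have hcardF : c.supp.toFinset.card = 4 := by
    rw [Set.toFinset_card]; exact hcard4
  -- memberships
  have memu : u ∈ c.supp := by
    rw [SimpleGraph.ConnectedComponent.mem_supp_iff]
  have r1 : (M ⊔ N).Reachable u (pm hM u) :=
    ((sup_adj_iff hM hN).mpr (Or.inl rfl)).reachable
  have r2 : (M ⊔ N).Reachable u (pm hN u) :=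
    ((sup_adj_iff hM hN).mpr (Or.inr rfl)).reachable
  have r3 : (M ⊔ N).Reachable u (pm hN (pm hM u)) :=
    r1.trans ((sup_adj_iff hM hN).mpr (Or.inr rfl)).reachable
  have r4 : (M ⊔ N).Reachable u (pm hM (pm hN u)) :=
    r2.trans ((sup_adj_iff hM hN).mpr (Or.inl rfl)).reachable
  have memsupp : ∀ {v : V}, (M ⊔ N).Reachable u v → v ∈ c.supp := by
    intro v hr
    rw [SimpleGraph.ConnectedComponent.mem_supp_iff, hcdef,
      SimpleGraph.ConnectedComponent.eq]
    exact hr.symm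
  -- distinctness facts
  have hab : u ≠ pm hM u := (pm_ne hM u).symm
  have had : u ≠ pm hN u := (pm_ne hN u).symm
  have hbd : pm hM u ≠ pm hN u := hne u
  have hay : u ≠ pm hN (pm hM u) := by
    intro h
    apply hne u
    have h2 := congrArg (pm hN) h
    rw [pm_pm hN (pm hM u)] at h2
    exact h2.symm
  have hby : pm hM u ≠ pm hN (pm hM u) := (pm_ne hN (pm hM u)).symm
  have hdy : pm hN u ≠ pm hN (pm hM u) := fun h => pm_ne hM u (pm_inj hN h.symm)
  -- the finset {u, f u, g u, g (f u)} equals supp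
  have hsub : ({u, pm hM u, pm hN u, pm hN (pm hM u)} : Finset V) ⊆ c.supp.toFinset := by
    intro v hv
    rw [Set.mem_toFinset]
    simp only [Finset.mem_insert, Finset.mem_singleton] at hv
    rcases hv with rfl | rfl | rfl | rfl
    · exact memu
    · exact memsupp r1
    · exact memsupp r2
    · exact memsupp r3
  have hcardA : ({u, pm hM u, pm hN u, pm hN (pm hM u)} : Finset V).card = 4 := by
    rw [Finset.card_insert_of_notMem (by simp [hab, had, hay]),
      Finset.card_insert_of_notMem (by simp [hbd, hby]),
      Finset.card_insert_of_notMem (by simp [hdy]), Finset.card_singleton]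
  have hEq : ({u, pm hM u, pm hN u, pm hN (pm hM u)} : Finset V) = c.supp.toFinset :=
    Finset.eq_of_subset_of_card_le hsub (by rw [hcardF, hcardA])
  -- x := f (g u) is in supp, hence in the finset
  have hx : pm hM (pm hN u) ∈ ({u, pm hM u, pm hN u, pm hN (pm hM u)} : Finset V) := by
    rw [hEq, Set.mem_toFinset]
    exact memsupp r4
  simp only [Finset.mem_insert, Finset.mem_singleton] at hx
  rcases hx with h | h | h | h
  · exfalso
    apply hne u
    have h2 := congrArg (pm hM) h
    rw [pm_pm hM (pm hN u)] at h2
    exact h2.symm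
  · exfalso
    exact had (pm_inj hM h).symm
  · exfalso
    exact pm_ne hM (pm hN u) h
  · exact h.symm

end Stmt13Aux


open Stmt13Aux

/-- Let `G` be a finite `k`-regular simple graph. Then `G` is decomposable
into commuting perfect matchings if and only if `G` has a 1-factorization (a partition of its
edge set into `k` perfect matchings) such that the union of any two distinct perfect matchings
of the 1-factorization is a disjoint union of copies of the 4-cycle `C₄`, i.e. every connected
component of the union is isomorphic to `C₄`. -/
theorem stmt_13 {V : Type*} [Fintype V] [DecidableEq V]
    (G : SimpleGraph V) (k : ℕ) (hreg : G.IsRegularOfDegree k) :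
    DecomposableIntoCommutingPerfectMatchings G ↔
      ∃ M : Fin k → SimpleGraph V,
        (∀ i, M i ≤ G) ∧
        (∀ i, ∀ v : V, ∃! w : V, (M i).Adj v w) ∧
        (∀ i j, i ≠ j → Disjoint (M i).edgeSet (M j).edgeSet) ∧
        (⋃ i, (M i).edgeSet) = G.edgeSet ∧
        (∀ i j, i ≠ j →
          ∀ c : (M i ⊔ M j).ConnectedComponent,
            Nonempty (SimpleGraph.induce c.supp (M i ⊔ M j) ≃g
              SimpleGraph.cycleGraph 4)) := by
  constructor
  · rintro ⟨k', M, hle, hpm, hdisj, hunion, hcomm⟩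
    cases isEmpty_or_nonempty V with
    | inl hV =>
      refine ⟨fun _ => ⊥, fun _ => bot_le, fun _ v => (IsEmpty.false v).elim,
        fun i j _ => by simp, ?_, fun i j _ c => ?_⟩
      · have : G.edgeSet = ∅ := by
          ext e
          induction e using Sym2.ind with
          | _ x y => exact (IsEmpty.false x).elim
        simp [this]
      · obtain ⟨v, -⟩ := c.exists_rep
        exact (IsEmpty.false v).elim
    | inr hV =>
      obtain ⟨v0⟩ := hV
      have hk : k' = k := by
        have himg : Finset.univ.image (fun i => pm (hpm i) v0) = G.neighborFinset v0 := by
          ext w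
          simp only [Finset.mem_image, Finset.mem_univ, true_and,
            SimpleGraph.mem_neighborFinset]
          constructor
          · rintro ⟨i, rfl⟩
            exact hle i (pm_adj (hpm i) v0)
          · intro hw
            have : s(v0, w) ∈ ⋃ i, (M i).edgeSet := by
              rw [hunion]; exact hw
            obtain ⟨_, ⟨i, rfl⟩, hi⟩ := this
            exact ⟨i, ((adj_iff_pm (hpm i)).mp hi).symm⟩
        have hinj : Function.Injective (fun i => pm (hpm i) v0) := by
          intro i j hij
          by_contra hne
          have h1 : s(v0, pm (hpm i) v0) ∈ (M i).edgeSet := pm_adj (hpm i) v0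
          have h2 : s(v0, pm (hpm i) v0) ∈ (M j).edgeSet := by
            rw [show pm (hpm i) v0 = pm (hpm j) v0 from hij]
            exact pm_adj (hpm j) v0
          exact Set.disjoint_left.mp (hdisj i j hne) h1 h2
        have := hreg v0
        rw [SimpleGraph.degree, ← himg, Finset.card_image_of_injective _ hinj,
          Finset.card_univ, Fintype.card_fin] at this
        exact this
      subst hk
      refine ⟨M, hle, hpm, hdisj, hunion, fun i j hij c => ?_⟩
      exact components_c4 (hpm i) (hpm j)
        ((commute_iff (hpm i) (hpm j)).mp (hcomm i j)) (hdisj i j hij) c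
  · rintro ⟨M, hle, hpm, hdisj, hunion, hC4⟩
    refine ⟨k, M, hle, hpm, hdisj, hunion, fun i j => ?_⟩
    rcases eq_or_ne i j with rfl | hij
    · exact Commute.refl _
    · exact (commute_iff (hpm i) (hpm j)).mpr
        (comm_of_c4 (hpm i) (hpm j) (hdisj i j hij) (hC4 i j hij))
end
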